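/- Let n ≥ 1 and let f_n denote the n-th Hermite function. Define the Wigner integrals G_n(x,k) = (2π)^{−1} · ∫_ℝ f_n(x + s/2) · f_n(x − s/2) · e^{−i·k·s} ds and H_n(x,k) = (2π)^{−1} · ∫_ℝ f_n(x + s/2) · f_{n−1}(x − s/2) · e^{−i·k·s} ds. Then G_n is differentiable in both variables, and for all (x,k) ∈ ℝ²: H_n(x,k) = (2n)^{−1/2} · ( (x − i·k)·G_n(x,k) + (1/2)·∂_x G_n(x,k) − (i/2)·∂_k G_n(x,k) ). In the paper's notation, h_n = (1/√(2n)) · ((x + ½∂_x) − i(k + ½∂_k)) g_n. -/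

import Mathlib

open Real Complex MeasureTheory

/-- The `n`-th Hermite function `f_n(x) = (2ⁿ n! √π)^{-1/2} e^{-x²/2} H_n(x)`, where
`H_n(x) = 2^{n/2} He_n(x√2)` and `He_n` is the probabilists' Hermite polynomial. -/
noncomputable def hermiteFun (n : ℕ) (x : ℝ) : ℝ :=
  (Real.sqrt (2 ^ n * n.factorial * Real.sqrt Real.pi))⁻¹ * Real.exp (-x ^ 2 / 2) *
    ((2 : ℝ) ^ ((n : ℝ) / 2) * Polynomial.aeval (x * Real.sqrt 2) (Polynomial.hermite n))

/-- The diagonal Wigner function `g_n` of the `n`-th Hermite function. -/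
noncomputable def wignerDiag (n : ℕ) (x k : ℝ) : ℂ :=
  (((2 * Real.pi)⁻¹ : ℝ) : ℂ) *
    ∫ s : ℝ, ((hermiteFun n (x + s / 2) * hermiteFun n (x - s / 2) : ℝ) : ℂ) *
      Complex.exp (-Complex.I * k * s)

/-- The cross Wigner function `h_n` of the Hermite functions `f_n` and `f_{n−1}`. -/
noncomputable def wignerCross (n : ℕ) (x k : ℝ) : ℂ :=
  (((2 * Real.pi)⁻¹ : ℝ) : ℂ) *
    ∫ s : ℝ, ((hermiteFun n (x + s / 2) * hermiteFun (n - 1) (x - s / 2) : ℝ) : ℂ) *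
      Complex.exp (-Complex.I * k * s)

section Helpers

open Polynomial Filter Set

/-! ### Derivative of the Hermite polynomial -/

private lemma hermite_deriv_pair (n : ℕ) :
    derivative (hermite (n+1)) = ((n:ℤ)+1) • hermite n ∧
    derivative (hermite (n+2)) = ((n:ℤ)+2) • hermite (n+1) := by
  induction n with
  | zero =>
    constructor
    · simp [hermite_one, hermite_zero]
    · show derivative (hermite 2) = (2:ℤ) • hermite 1
      rw [show (2:ℕ) = 1 + 1 from rfl, hermite_succ, hermite_one]
      simp [hermite_one]
      ring
  | succ m ih =>
    obtain ⟨h1, h2⟩ := ih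
    refine ⟨h2, ?_⟩
    have key : X * hermite (m+1) - ((m:ℤ)+1) • hermite m = hermite (m+2) := by
      rw [hermite_succ (m+1), h1]
    rw [show m+1+2 = (m+2)+1 from rfl, hermite_succ (m+2), derivative_sub, derivative_mul,
      derivative_X, one_mul, h2, derivative_smul, h1, mul_smul_comm, smul_smul]
    simp only [zsmul_eq_mul] at key ⊢
    push_cast [Int.cast_add, Int.cast_natCast, Int.cast_one] at key ⊢
    linear_combination ((m:Polynomial ℤ)+2) * key

private lemma hermite_deriv (n : ℕ) (hn : 1 ≤ n) :
    derivative (hermite n) = (n:ℤ) • hermite (n-1) := by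
  obtain ⟨m, rfl⟩ := Nat.exists_eq_add_of_le hn
  simpa [add_comm] using (hermite_deriv_pair m).1

/-! ### The real Hermite polynomial and basic rewriting -/

private noncomputable def cP (n : ℕ) : Polynomial ℝ :=
  (Polynomial.hermite n).map (Int.castRingHom ℝ)

private lemma cP_natDegree (n : ℕ) : (cP n).natDegree = n := by
  unfold cP
  rw [(hermite_monic n).natDegree_map, natDegree_hermite]

private lemma hermiteFun_eq (n : ℕ) (x : ℝ) : hermiteFun n x =
    (Real.sqrt (2 ^ n * n.factorial * Real.sqrt Real.pi))⁻¹ * Real.exp (-x ^ 2 / 2) *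
      ((2 : ℝ) ^ ((n : ℝ) / 2) * (cP n).eval (x * Real.sqrt 2)) := by
  unfold hermiteFun cP
  rw [Polynomial.aeval_def, Polynomial.eval₂_eq_eval_map, algebraMap_int_eq]

/-! ### Growth bounds -/

private noncomputable def wB (N : ℕ) (s : ℝ) : ℝ := (1+|s|)^N * Real.exp (-s^2/4)

private lemma wB_nonneg (N : ℕ) (s : ℝ) : 0 ≤ wB N s := by
  unfold wB; positivity

private lemma wB_mono {m N : ℕ} (h : m ≤ N) (s : ℝ) : wB m s ≤ wB N s := by
  unfold wB
  exact mul_le_mul_of_nonneg_right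
    (pow_le_pow_right₀ (by linarith [abs_nonneg s]) h) (Real.exp_pos _).le

private lemma wB_succ (N : ℕ) (s : ℝ) : (1+|s|) * wB N s = wB (N+1) s := by
  unfold wB; ring

private lemma integrable_wB (N : ℕ) : Integrable (wB N) := by
  have h1 : Integrable (fun s : ℝ => Real.exp (-(1/4) * s^2)) :=
    integrable_exp_neg_mul_sq (by norm_num)
  have h2 : Integrable (fun s : ℝ => s ^ N * Real.exp (-(1/4) * s^2)) := by
    have := integrable_rpow_mul_exp_neg_mul_sq (b := 1/4) (by norm_num) (s := (N:ℝ))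
      (lt_of_lt_of_le (by norm_num) (Nat.cast_nonneg N))
    simpa [Real.rpow_natCast] using this
  have h3 : Integrable (fun s : ℝ => |s| ^ N * Real.exp (-(1/4) * s^2)) := by
    have := h2.abs
    simpa [abs_mul, _root_.abs_pow, Real.abs_exp] using this
  have h4 : Integrable (fun s : ℝ =>
      2^N * Real.exp (-(1/4) * s^2) + 2^N * (|s| ^ N * Real.exp (-(1/4) * s^2))) :=
    (h1.const_mul _).add (h3.const_mul _)
  refine h4.mono' ?_ ?_
  · apply Continuous.aestronglyMeasurable
    unfold wB
    continuity
  · filter_upwards with s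
    have hb : (1+|s|)^N ≤ 2^N + 2^N * |s|^N := by
      calc (1+|s|)^N ≤ (2 * max 1 |s|)^N := by
            apply pow_le_pow_left₀ (by positivity)
            rcases le_total (|s|) 1 with h | h
            · rw [max_eq_left h]; linarith
            · rw [max_eq_right h]; linarith
        _ = 2^N * (max 1 |s|)^N := by rw [mul_pow]
        _ ≤ 2^N * (1 + |s|^N) := by
            apply mul_le_mul_of_nonneg_left _ (by positivity)
            rcases le_total (|s|) 1 with h | h
            · rw [max_eq_left h]; rw [one_pow]
              linarith [pow_nonneg (abs_nonneg s) N]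
            · rw [max_eq_right h]; linarith
        _ = 2^N + 2^N * |s|^N := by ring
    have hw : ‖wB N s‖ = wB N s := abs_of_nonneg (wB_nonneg N s)
    rw [hw]
    unfold wB
    have he : -s^2/4 = -(1/4) * s^2 := by ring
    rw [he]
    calc (1+|s|)^N * Real.exp (-(1/4)*s^2)
        ≤ (2^N + 2^N * |s|^N) * Real.exp (-(1/4)*s^2) := by
          apply mul_le_mul_of_nonneg_right hb (Real.exp_pos _).le
      _ = 2^N * Real.exp (-(1/4)*s^2) + 2^N * (|s|^N * Real.exp (-(1/4)*s^2)) := by ring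

private lemma tendsto_wB_atTop (N : ℕ) : Tendsto (wB N) atTop (nhds 0) := by
  have key : Tendsto (fun s : ℝ => 2^N * (s^N * Real.exp (-s))) atTop (nhds 0) := by
    simpa using (tendsto_pow_mul_exp_neg_atTop_nhds_zero N).const_mul (2^N : ℝ)
  apply squeeze_zero' (Eventually.of_forall (wB_nonneg N)) _ key
  filter_upwards [eventually_ge_atTop (4:ℝ)] with s hs
  have hs0 : (0:ℝ) ≤ s := by linarith
  have h1 : (1+|s|)^N ≤ (2*s)^N := by
    apply pow_le_pow_left₀ (by positivity)
    rw [_root_.abs_of_nonneg hs0]; linarith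
  have h2 : Real.exp (-s^2/4) ≤ Real.exp (-s) := by
    apply Real.exp_le_exp.2
    nlinarith
  unfold wB
  calc (1+|s|)^N * Real.exp (-s^2/4) ≤ (2*s)^N * Real.exp (-s) := by
        apply mul_le_mul h1 h2 (Real.exp_pos _).le (by positivity)
    _ = 2^N * (s^N * Real.exp (-s)) := by rw [mul_pow]; ring

private lemma tendsto_wB_atBot (N : ℕ) : Tendsto (wB N) atBot (nhds 0) := by
  have h := (tendsto_wB_atTop N).comp tendsto_neg_atBot_atTop
  have heq : wB N ∘ Neg.neg = wB N := funext fun s => by simp [wB, abs_neg, neg_sq]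
  rwa [heq] at h

/-! ### Pointwise bounds on Hermite functions -/

private lemma poly_bound (p : Polynomial ℝ) :
    ∃ C : ℝ, 0 ≤ C ∧ ∀ y : ℝ, |p.eval y| ≤ C * (1+|y|)^p.natDegree := by
  refine ⟨∑ i ∈ Finset.range (p.natDegree+1), |p.coeff i|, by positivity, fun y => ?_⟩
  rw [Polynomial.eval_eq_sum_range]
  calc |∑ i ∈ Finset.range (p.natDegree+1), p.coeff i * y^i|
      ≤ ∑ i ∈ Finset.range (p.natDegree+1), |p.coeff i * y^i| :=
        Finset.abs_sum_le_sum_abs _ _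
    _ ≤ ∑ i ∈ Finset.range (p.natDegree+1), |p.coeff i| * (1+|y|)^p.natDegree := by
        apply Finset.sum_le_sum
        intro i hi
        rw [abs_mul, _root_.abs_pow]
        apply mul_le_mul_of_nonneg_left _ (abs_nonneg _)
        calc |y|^i ≤ (1+|y|)^i := pow_le_pow_left₀ (abs_nonneg y) (by linarith) i
          _ ≤ (1+|y|)^p.natDegree := pow_le_pow_right₀ (by linarith [abs_nonneg y])
              (Nat.lt_succ_iff.mp (Finset.mem_range.1 hi))
    _ = (∑ i ∈ Finset.range (p.natDegree+1), |p.coeff i|) * (1+|y|)^p.natDegree :=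
        (Finset.sum_mul _ _ _).symm

private lemma hermiteFun_bound (m : ℕ) :
    ∃ C : ℝ, 0 ≤ C ∧ ∀ y : ℝ,
      |hermiteFun m y| ≤ C * (1+|y|)^m * Real.exp (-y^2/2) := by
  obtain ⟨C, hC0, hC⟩ := poly_bound (cP m)
  set c : ℝ := (Real.sqrt (2 ^ m * m.factorial * Real.sqrt Real.pi))⁻¹ with hc
  set d : ℝ := (2:ℝ)^((m:ℝ)/2) with hd
  have hc0 : 0 ≤ c := by positivity
  have hd0 : 0 < d := by positivity
  have h2 : (1:ℝ) ≤ Real.sqrt 2 := by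
    rw [show (1:ℝ) = Real.sqrt 1 by simp]
    exact Real.sqrt_le_sqrt (by norm_num)
  refine ⟨c * d * (C * (Real.sqrt 2)^m), by positivity, fun y => ?_⟩
  rw [hermiteFun_eq]
  have key : |(cP m).eval (y * Real.sqrt 2)| ≤ C * (Real.sqrt 2)^m * (1+|y|)^m := by
    calc |(cP m).eval (y * Real.sqrt 2)| ≤ C * (1+|y * Real.sqrt 2|)^(cP m).natDegree :=
          hC _
      _ = C * (1+|y| * Real.sqrt 2)^m := by
          rw [cP_natDegree, abs_mul, _root_.abs_of_nonneg (by positivity : (0:ℝ) ≤ Real.sqrt 2)]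
      _ ≤ C * (Real.sqrt 2 * (1+|y|))^m := by
          apply mul_le_mul_of_nonneg_left _ hC0
          apply pow_le_pow_left₀ (by positivity)
          nlinarith [abs_nonneg y]
      _ = C * (Real.sqrt 2)^m * (1+|y|)^m := by rw [mul_pow]; ring
  calc |c * Real.exp (-y^2/2) * (d * (cP m).eval (y * Real.sqrt 2))|
      = c * Real.exp (-y^2/2) * (d * |(cP m).eval (y * Real.sqrt 2)|) := by
        rw [abs_mul, abs_mul, abs_mul, _root_.abs_of_nonneg hc0, Real.abs_exp,
          _root_.abs_of_nonneg hd0.le]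
    _ ≤ c * Real.exp (-y^2/2) * (d * (C * (Real.sqrt 2)^m * (1+|y|)^m)) := by
        apply mul_le_mul_of_nonneg_left _ (by positivity)
        exact mul_le_mul_of_nonneg_left key hd0.le
    _ = c * d * (C * (Real.sqrt 2)^m) * (1+|y|)^m * Real.exp (-y^2/2) := by ring

private lemma continuous_hermiteFun (m : ℕ) : Continuous (hermiteFun m) := by
  have h : hermiteFun m = fun x =>
      (Real.sqrt (2 ^ m * m.factorial * Real.sqrt Real.pi))⁻¹ * Real.exp (-x ^ 2 / 2) *
        ((2 : ℝ) ^ ((m : ℝ) / 2) * (cP m).eval (x * Real.sqrt 2)) := funext (hermiteFun_eq m)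
  rw [h]
  exact (continuous_const.mul (Real.continuous_exp.comp (by continuity))).mul
    (continuous_const.mul ((cP m).continuous.comp (by continuity)))

/-! ### The derivative of the Hermite function -/

private lemma const_id (m : ℕ) :
    (Real.sqrt (2^(m+1) * (m+1).factorial * Real.sqrt Real.pi))⁻¹ *
        (2:ℝ)^(((m+1:ℕ):ℝ)/2) * ((m:ℝ)+1) * Real.sqrt 2
      = Real.sqrt (2*((m+1:ℕ):ℝ)) *
        ((Real.sqrt (2^m * m.factorial * Real.sqrt Real.pi))⁻¹ * (2:ℝ)^((m:ℝ)/2)) := by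
  have hfac : (0:ℝ) < (m.factorial : ℝ) := by exact_mod_cast m.factorial_pos
  have hA : (0:ℝ) < 2^m * m.factorial * Real.sqrt Real.pi := by positivity
  have hB : (0:ℝ) < 2*((m+1:ℕ):ℝ) := by positivity
  have hfact : (2:ℝ)^(m+1) * ((m+1).factorial:ℝ) * Real.sqrt Real.pi
      = (2^m * m.factorial * Real.sqrt Real.pi) * (2*((m+1:ℕ):ℝ)) := by
    push_cast [Nat.factorial_succ]
    ring
  rw [hfact, Real.sqrt_mul hA.le]
  have hp : (((m+1:ℕ)):ℝ)/2 = (m:ℝ)/2 + 1/2 := by push_cast; ring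
  rw [hp, Real.rpow_add two_pos]
  have h12 : (2:ℝ) ^ ((1:ℝ)/2 : ℝ) = Real.sqrt 2 := (Real.sqrt_eq_rpow 2).symm
  rw [h12]
  have hsA : (0:ℝ) < Real.sqrt (2^m * m.factorial * Real.sqrt Real.pi) := Real.sqrt_pos.mpr hA
  have hsB : (0:ℝ) < Real.sqrt (2*((m+1:ℕ):ℝ)) := Real.sqrt_pos.mpr hB
  have hM : Real.sqrt ((m:ℝ)+1) * Real.sqrt ((m:ℝ)+1) = (m:ℝ)+1 :=
    Real.mul_self_sqrt (by positivity)
  rw [mul_inv]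
  field_simp
  rw [Real.sq_sqrt (by norm_num), Real.sq_sqrt hB.le]; push_cast; ring

private noncomputable def hermiteDeriv (n : ℕ) (y : ℝ) : ℝ :=
  Real.sqrt (2*(n:ℝ)) * hermiteFun (n-1) y - y * hermiteFun n y

private lemma hasDerivAt_hermiteFun {n : ℕ} (hn : 1 ≤ n) (y : ℝ) :
    HasDerivAt (hermiteFun n) (hermiteDeriv n y) y := by
  obtain ⟨m, rfl⟩ : ∃ m, n = m+1 := ⟨n-1, (Nat.succ_pred_eq_of_pos hn).symm⟩
  have hE : HasDerivAt (fun x : ℝ => Real.exp (-x^2/2)) (Real.exp (-y^2/2) * (-y)) y := by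
    have h0 : HasDerivAt (fun x : ℝ => -x^2/2) (-y) y := by
      have h1 := ((hasDerivAt_pow 2 y).neg).div_const 2
      exact h1.congr_deriv (by rw [show (2:ℕ)-1 = 1 from rfl]; push_cast; ring)
    exact h0.exp
  have hder : (cP (m+1)).derivative = Polynomial.C ((m:ℝ)+1) * cP m := by
    unfold cP
    rw [Polynomial.derivative_map, hermite_deriv (m+1) (by omega)]
    rw [Nat.add_sub_cancel, zsmul_eq_mul, Polynomial.map_mul, Polynomial.map_intCast]
    push_cast
    simp only [map_add, Polynomial.C_eq_natCast, Polynomial.C_1]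
  have hQ : HasDerivAt (fun x : ℝ => (cP (m+1)).eval (x*Real.sqrt 2))
      ((((m:ℝ)+1) * (cP m).eval (y*Real.sqrt 2)) * Real.sqrt 2) y := by
    have h1 := (cP (m+1)).hasDerivAt (y*Real.sqrt 2)
    have h2 : HasDerivAt (fun x : ℝ => x * Real.sqrt 2) (Real.sqrt 2) y :=
      hasDerivAt_mul_const _
    have h3 := HasDerivAt.comp y h1 h2
    exact h3.congr_deriv (by rw [hder, Polynomial.eval_mul, Polynomial.eval_C])
  have hprod := (hE.const_mul
      ((Real.sqrt (2^(m+1) * (m+1).factorial * Real.sqrt Real.pi))⁻¹)).mul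
      (hQ.const_mul ((2:ℝ)^(((m+1:ℕ):ℝ)/2)))
  have hmain : HasDerivAt (hermiteFun (m+1))
      ((Real.sqrt (2^(m+1) * (m+1).factorial * Real.sqrt Real.pi))⁻¹ *
          (Real.exp (-y^2/2) * (-y)) *
          ((2:ℝ)^(((m+1:ℕ):ℝ)/2) * (cP (m+1)).eval (y*Real.sqrt 2)) +
        (Real.sqrt (2^(m+1) * (m+1).factorial * Real.sqrt Real.pi))⁻¹ *
          Real.exp (-y^2/2) *
          ((2:ℝ)^(((m+1:ℕ):ℝ)/2) * ((((m:ℝ)+1) * (cP m).eval (y*Real.sqrt 2)) *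
            Real.sqrt 2))) y := by
    apply HasDerivAt.congr_of_eventuallyEq hprod
    exact Filter.Eventually.of_forall fun x => hermiteFun_eq (m+1) x
  convert hmain using 1
  unfold hermiteDeriv
  rw [Nat.add_sub_cancel, hermiteFun_eq m, hermiteFun_eq (m+1)]
  linear_combination (-(Real.exp (-y^2/2) * (cP m).eval (y*Real.sqrt 2))) * const_id m

/-! ### Product bounds -/

private lemma prod_bound (m1 m2 : ℕ) (R : ℝ) (hR : 0 ≤ R) :
    ∃ C, 0 ≤ C ∧ ∀ x s : ℝ, |x| ≤ R →
      |hermiteFun m1 (x+s/2)| * |hermiteFun m2 (x-s/2)| ≤ C * wB (m1+m2) s := by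
  obtain ⟨C1, h10, h1⟩ := hermiteFun_bound m1
  obtain ⟨C2, h20, h2⟩ := hermiteFun_bound m2
  refine ⟨C1*C2*(1+R)^(m1+m2), by positivity, fun x s hx => ?_⟩
  have habs2 : |s/2| = |s|/2 := by rw [abs_div]; norm_num
  have ha : 1+|x+s/2| ≤ (1+R)*(1+|s|) := by
    have h := abs_add_le x (s/2)
    have := abs_nonneg s
    have := mul_nonneg hR (abs_nonneg s)
    rw [habs2] at h
    nlinarith
  have hb : 1+|x-s/2| ≤ (1+R)*(1+|s|) := by
    have h : |x - s/2| ≤ |x| + |s/2| := by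
      rw [sub_eq_add_neg]
      simpa [abs_neg] using abs_add_le x (-(s/2))
    have := abs_nonneg s
    have := mul_nonneg hR (abs_nonneg s)
    rw [habs2] at h
    nlinarith
  have hexp : Real.exp (-(x+s/2)^2/2) * Real.exp (-(x-s/2)^2/2)
      = Real.exp (-x^2) * Real.exp (-s^2/4) := by
    rw [← Real.exp_add, ← Real.exp_add]
    congr 1
    ring
  calc |hermiteFun m1 (x+s/2)| * |hermiteFun m2 (x-s/2)|
      ≤ (C1 * (1+|x+s/2|)^m1 * Real.exp (-(x+s/2)^2/2)) *
        (C2 * (1+|x-s/2|)^m2 * Real.exp (-(x-s/2)^2/2)) :=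
        mul_le_mul (h1 _) (h2 _) (abs_nonneg _) (by positivity)
    _ = C1*C2 * ((1+|x+s/2|)^m1 * (1+|x-s/2|)^m2) *
        (Real.exp (-x^2) * Real.exp (-s^2/4)) := by
        linear_combination (C1*C2*((1+|x+s/2|)^m1 * (1+|x-s/2|)^m2)) * hexp
    _ ≤ C1*C2 * (((1+R)*(1+|s|))^m1 * ((1+R)*(1+|s|))^m2) *
        (1 * Real.exp (-s^2/4)) := by
        have hx1 : Real.exp (-x^2) ≤ 1 :=
          Real.exp_le_one_iff.mpr (neg_nonpos.mpr (sq_nonneg x))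
        gcongr <;> first | positivity | exact ha | exact hb | exact hx1
    _ = C1*C2*(1+R)^(m1+m2) * wB (m1+m2) s := by
        unfold wB
        rw [← pow_add, mul_pow]
        ring

/-! ### Bounds involving the derivative -/

private lemma hermiteDeriv_abs_le (n : ℕ) (y : ℝ) :
    |hermiteDeriv n y| ≤ Real.sqrt (2*(n:ℝ)) * |hermiteFun (n-1) y| + |y| * |hermiteFun n y| := by
  unfold hermiteDeriv
  have h : |Real.sqrt (2*(n:ℝ)) * hermiteFun (n-1) y - y * hermiteFun n y|
      ≤ |Real.sqrt (2*(n:ℝ)) * hermiteFun (n-1) y| + |y * hermiteFun n y| := by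
    rw [sub_eq_add_neg]
    simpa [abs_neg] using abs_add_le (Real.sqrt (2*(n:ℝ)) * hermiteFun (n-1) y)
      (-(y * hermiteFun n y))
  calc |Real.sqrt (2*(n:ℝ)) * hermiteFun (n-1) y - y * hermiteFun n y|
      ≤ |Real.sqrt (2*(n:ℝ)) * hermiteFun (n-1) y| + |y * hermiteFun n y| := h
    _ = Real.sqrt (2*(n:ℝ)) * |hermiteFun (n-1) y| + |y| * |hermiteFun n y| := by
        rw [abs_mul, abs_mul, _root_.abs_of_nonneg (Real.sqrt_nonneg _)]

private lemma hermiteDeriv_prod_bound (n : ℕ) (R : ℝ) (hR : 0 ≤ R) :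
    ∃ C, 0 ≤ C ∧ ∀ x s : ℝ, |x| ≤ R →
      |hermiteDeriv n (x+s/2)| * |hermiteFun n (x-s/2)| ≤ C * wB (n+n+1) s ∧
      |hermiteFun n (x+s/2)| * |hermiteDeriv n (x-s/2)| ≤ C * wB (n+n+1) s := by
  obtain ⟨C1, h10, h1⟩ := prod_bound (n-1) n R hR
  obtain ⟨C2, h20, h2⟩ := prod_bound n n R hR
  obtain ⟨C3, h30, h3⟩ := prod_bound n (n-1) R hR
  have hq0 : 0 ≤ Real.sqrt (2*(n:ℝ)) := Real.sqrt_nonneg _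
  set q := Real.sqrt (2*(n:ℝ)) with hqdef
  refine ⟨q*C1 + (1+R)*C2 + (q*C3 + (1+R)*C2), by positivity, fun x s hx => ?_⟩
  have habs2 : |s/2| = |s|/2 := by rw [abs_div]; norm_num
  have hy1 : |x+s/2| ≤ (1+R)*(1+|s|) := by
    have h := abs_add_le x (s/2)
    rw [habs2] at h
    have := abs_nonneg s
    have := mul_nonneg hR (abs_nonneg s)
    nlinarith
  have hy2 : |x-s/2| ≤ (1+R)*(1+|s|) := by
    have h : |x - s/2| ≤ |x| + |s/2| := by
      rw [sub_eq_add_neg]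
      simpa [abs_neg] using abs_add_le x (-(s/2))
    rw [habs2] at h
    have := abs_nonneg s
    have := mul_nonneg hR (abs_nonneg s)
    nlinarith
  have hmono1 : wB (n-1+n) s ≤ wB (n+n+1) s := wB_mono (by omega) s
  have hmono3 : wB (n+(n-1)) s ≤ wB (n+n+1) s := wB_mono (by omega) s
  have hwB0 : 0 ≤ wB (n+n+1) s := wB_nonneg _ _
  have hextra1 : 0 ≤ (q*C3 + (1+R)*C2) * wB (n+n+1) s := by positivity
  have hextra2 : 0 ≤ (q*C1 + (1+R)*C2) * wB (n+n+1) s := by positivity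
  constructor
  · calc |hermiteDeriv n (x+s/2)| * |hermiteFun n (x-s/2)|
        ≤ (q * |hermiteFun (n-1) (x+s/2)| + |x+s/2| * |hermiteFun n (x+s/2)|) *
            |hermiteFun n (x-s/2)| :=
          mul_le_mul_of_nonneg_right (hermiteDeriv_abs_le n (x+s/2)) (abs_nonneg _)
      _ = q * (|hermiteFun (n-1) (x+s/2)| * |hermiteFun n (x-s/2)|)
            + |x+s/2| * (|hermiteFun n (x+s/2)| * |hermiteFun n (x-s/2)|) := by ring
      _ ≤ q * (C1 * wB (n-1+n) s) + ((1+R)*(1+|s|)) * (C2 * wB (n+n) s) := by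
          have t1 := mul_le_mul_of_nonneg_left (h1 x s hx) hq0
          have t2 := mul_le_mul hy1 (h2 x s hx)
            (mul_nonneg (abs_nonneg _) (abs_nonneg _)) (by positivity)
          linarith
      _ = q * (C1 * wB (n-1+n) s) + (1+R) * (C2 * wB (n+n+1) s) := by
          rw [← wB_succ (n+n) s]; ring
      _ ≤ q * (C1 * wB (n+n+1) s) + (1+R) * (C2 * wB (n+n+1) s) := by
          have := mul_le_mul_of_nonneg_left (mul_le_mul_of_nonneg_left hmono1 h10) hq0
          linarith
      _ ≤ (q*C1 + (1+R)*C2 + (q*C3 + (1+R)*C2)) * wB (n+n+1) s := by nlinarith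
  · calc |hermiteFun n (x+s/2)| * |hermiteDeriv n (x-s/2)|
        ≤ |hermiteFun n (x+s/2)| *
            (q * |hermiteFun (n-1) (x-s/2)| + |x-s/2| * |hermiteFun n (x-s/2)|) :=
          mul_le_mul_of_nonneg_left (hermiteDeriv_abs_le n (x-s/2)) (abs_nonneg _)
      _ = q * (|hermiteFun n (x+s/2)| * |hermiteFun (n-1) (x-s/2)|)
            + |x-s/2| * (|hermiteFun n (x+s/2)| * |hermiteFun n (x-s/2)|) := by ring
      _ ≤ q * (C3 * wB (n+(n-1)) s) + ((1+R)*(1+|s|)) * (C2 * wB (n+n) s) := by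
          have t1 := mul_le_mul_of_nonneg_left (h3 x s hx) hq0
          have t2 := mul_le_mul hy2 (h2 x s hx)
            (mul_nonneg (abs_nonneg _) (abs_nonneg _)) (by positivity)
          linarith
      _ = q * (C3 * wB (n+(n-1)) s) + (1+R) * (C2 * wB (n+n+1) s) := by
          rw [← wB_succ (n+n) s]; ring
      _ ≤ q * (C3 * wB (n+n+1) s) + (1+R) * (C2 * wB (n+n+1) s) := by
          have := mul_le_mul_of_nonneg_left (mul_le_mul_of_nonneg_left hmono3 h30) hq0
          linarith
      _ ≤ (q*C1 + (1+R)*C2 + (q*C3 + (1+R)*C2)) * wB (n+n+1) s := by nlinarith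

/-! ### Continuity and norms of integrands -/

private lemma continuous_hermiteDeriv (n : ℕ) : Continuous (hermiteDeriv n) := by
  unfold hermiteDeriv
  exact (continuous_const.mul (continuous_hermiteFun _)).sub
    (continuous_id.mul (continuous_hermiteFun _))

private lemma continuous_plus (x : ℝ) : Continuous fun s : ℝ => x + s/2 := by continuity

private lemma continuous_minus (x : ℝ) : Continuous fun s : ℝ => x - s/2 := by
  have : (fun s : ℝ => x - s/2) = fun s : ℝ => x + (-(s/2)) := by funext s; ring
  rw [this]; continuity

private lemma continuous_phi (m1 m2 : ℕ) (x : ℝ) :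
    Continuous fun s : ℝ => ((hermiteFun m1 (x+s/2) * hermiteFun m2 (x-s/2) : ℝ) : ℂ) :=
  Complex.continuous_ofReal.comp
    (((continuous_hermiteFun m1).comp (continuous_plus x)).mul
      ((continuous_hermiteFun m2).comp (continuous_minus x)))

private lemma continuous_eker (k : ℝ) :
    Continuous fun s : ℝ => Complex.exp (-Complex.I * k * s) :=
  Complex.continuous_exp.comp (continuous_const.mul Complex.continuous_ofReal)

private lemma norm_eker (k s : ℝ) : ‖Complex.exp (-Complex.I * k * s)‖ = 1 := by
  rw [Complex.norm_exp]
  have h : (-Complex.I * k * s).re = 0 := by simp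
  rw [h, Real.exp_zero]

/-! ### Derivatives of the kernel -/

private lemma hasDerivAt_eker_k (s : ℝ) (k : ℝ) :
    HasDerivAt (fun k' : ℝ => Complex.exp (-Complex.I * k' * s))
      ((-Complex.I * s) * Complex.exp (-Complex.I * k * s)) k := by
  have h1 : HasDerivAt (fun k' : ℝ => ((k' : ℝ) : ℂ)) 1 k := by
    simpa using (hasDerivAt_id k).ofReal_comp
  have h2 := ((h1.const_mul (-Complex.I)).mul_const ((s : ℝ) : ℂ)).cexp
  convert h2 using 1
  ring

private lemma hasDerivAt_eker_s (k : ℝ) (s : ℝ) :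
    HasDerivAt (fun s' : ℝ => Complex.exp (-Complex.I * k * s'))
      ((-Complex.I * k) * Complex.exp (-Complex.I * k * s)) s := by
  have h1 : HasDerivAt (fun s' : ℝ => ((s' : ℝ) : ℂ)) 1 s := by
    simpa using (hasDerivAt_id s).ofReal_comp
  have h2 := (h1.const_mul (-Complex.I * k)).cexp
  convert h2 using 1
  ring

/-! ### Integrability helper -/

private lemma integrable_of_bound {h : ℝ → ℂ} {C : ℝ} {N : ℕ}
    (hmeas : AEStronglyMeasurable h (volume : Measure ℝ))
    (hb : ∀ s, ‖h s‖ ≤ C * wB N s) : Integrable h :=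
  ((integrable_wB N).const_mul C).mono' hmeas (Filter.Eventually.of_forall hb)

private lemma integral_deriv_zero (G G' : ℝ → ℂ) (hG : ∀ s, HasDerivAt G (G' s) s)
    (hint : Integrable G')
    (htop : Filter.Tendsto G Filter.atTop (nhds 0))
    (hbot : Filter.Tendsto G Filter.atBot (nhds 0)) :
    ∫ s : ℝ, G' s = 0 := by
  have h1 := integral_Iic_of_hasDerivAt_of_tendsto' (a := 0) (fun s _ => hG s)
    hint.integrableOn hbot
  have h2 := integral_Ioi_of_hasDerivAt_of_tendsto' (a := 0) (fun s _ => hG s)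
    hint.integrableOn htop
  rw [← intervalIntegral.integral_Iic_add_Ioi (b := (0:ℝ)) hint.integrableOn hint.integrableOn, h1, h2]
  ring

/-! ### Differentiating the Wigner integral -/

private lemma wignerDiag_hasDerivAt_k (n : ℕ) (x k : ℝ) :
    HasDerivAt (fun k' => wignerDiag n x k')
      ((((2 * Real.pi)⁻¹ : ℝ) : ℂ) *
        ∫ s : ℝ, ((hermiteFun n (x + s / 2) * hermiteFun n (x - s / 2) : ℝ) : ℂ) *
          ((-Complex.I * s) * Complex.exp (-Complex.I * k * s))) k := by
  obtain ⟨C, hC0, hC⟩ := prod_bound n n |x| (abs_nonneg x)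
  have hphi : ∀ s : ℝ, |hermiteFun n (x+s/2) * hermiteFun n (x-s/2)| ≤ C * wB (n+n) s := by
    intro s
    rw [abs_mul]
    exact hC x s le_rfl
  have key := hasDerivAt_integral_of_dominated_loc_of_deriv_le (μ := (volume : Measure ℝ))
    (F := fun (k' : ℝ) (s : ℝ) =>
      ((hermiteFun n (x + s / 2) * hermiteFun n (x - s / 2) : ℝ) : ℂ) *
        Complex.exp (-Complex.I * k' * s))
    (F' := fun (k' : ℝ) (s : ℝ) =>
      ((hermiteFun n (x + s / 2) * hermiteFun n (x - s / 2) : ℝ) : ℂ) *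
        ((-Complex.I * s) * Complex.exp (-Complex.I * k' * s)))
    (x₀ := k) (bound := fun s => C * wB (n+n+1) s) (s := Metric.ball k 1) (Metric.ball_mem_nhds k one_pos)
    (Filter.Eventually.of_forall fun k' =>
      (((continuous_phi n n x).mul (continuous_eker k')).aestronglyMeasurable))
    (integrable_of_bound (N := n+n+1)
      (((continuous_phi n n x).mul (continuous_eker k)).aestronglyMeasurable)
      (fun s => by
        rw [norm_mul, Complex.norm_real, Real.norm_eq_abs, norm_eker, mul_one]
        exact le_trans (hphi s) (mul_le_mul_of_nonneg_left (wB_mono (by omega) s) hC0)))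
    (((continuous_phi n n x).mul
      ((continuous_const.mul Complex.continuous_ofReal).mul
        (continuous_eker k))).aestronglyMeasurable)
    (Filter.Eventually.of_forall fun s k' _ => by
      rw [norm_mul, Complex.norm_real, Real.norm_eq_abs, norm_mul, norm_eker, mul_one]
      have h1 : ‖-Complex.I * (s:ℂ)‖ = |s| := by
        rw [norm_mul, norm_neg, Complex.norm_I, one_mul, Complex.norm_real, Real.norm_eq_abs]
      rw [h1]
      calc |hermiteFun n (x+s/2) * hermiteFun n (x-s/2)| * |s|
          ≤ (C * wB (n+n) s) * (1+|s|) := by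
            apply mul_le_mul (hphi s) (by linarith [abs_nonneg s]) (abs_nonneg s)
            exact mul_nonneg hC0 (wB_nonneg _ _)
        _ = C * wB (n+n+1) s := by rw [← wB_succ]; ring)
    ((integrable_wB (n+n+1)).const_mul C)
    (Filter.Eventually.of_forall fun s k' _ =>
      (hasDerivAt_eker_k s k').const_mul
        ((hermiteFun n (x + s / 2) * hermiteFun n (x - s / 2) : ℝ) : ℂ))
  have hfinal := key.2.const_mul (((2 * Real.pi)⁻¹ : ℝ) : ℂ)
  unfold wignerDiag
  exact hfinal

private lemma wignerDiag_hasDerivAt_x (n : ℕ) (hn : 1 ≤ n) (x k : ℝ) :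
    HasDerivAt (fun x' => wignerDiag n x' k)
      ((((2 * Real.pi)⁻¹ : ℝ) : ℂ) *
        ∫ s : ℝ, ((hermiteDeriv n (x + s / 2) * hermiteFun n (x - s / 2)
            + hermiteFun n (x + s / 2) * hermiteDeriv n (x - s / 2) : ℝ) : ℂ) *
          Complex.exp (-Complex.I * k * s)) x := by
  obtain ⟨C, hC0, hC⟩ := hermiteDeriv_prod_bound n (|x|+1) (by positivity)
  obtain ⟨C2, hC20, hC2⟩ := prod_bound n n |x| (abs_nonneg x)
  have key := hasDerivAt_integral_of_dominated_loc_of_deriv_le (μ := (volume : Measure ℝ))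
    (F := fun (x' : ℝ) (s : ℝ) =>
      ((hermiteFun n (x' + s / 2) * hermiteFun n (x' - s / 2) : ℝ) : ℂ) *
        Complex.exp (-Complex.I * k * s))
    (F' := fun (x' : ℝ) (s : ℝ) =>
      ((hermiteDeriv n (x' + s / 2) * hermiteFun n (x' - s / 2)
          + hermiteFun n (x' + s / 2) * hermiteDeriv n (x' - s / 2) : ℝ) : ℂ) *
        Complex.exp (-Complex.I * k * s))
    (x₀ := x) (bound := fun s => (C + C) * wB (n+n+1) s) (s := Metric.ball x 1) (Metric.ball_mem_nhds x one_pos)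
    (Filter.Eventually.of_forall fun x' =>
      (((continuous_phi n n x').mul (continuous_eker k)).aestronglyMeasurable))
    (integrable_of_bound (((continuous_phi n n x).mul (continuous_eker k)).aestronglyMeasurable)
      (fun s => by
        rw [norm_mul, Complex.norm_real, Real.norm_eq_abs, norm_eker, mul_one, abs_mul]
        exact hC2 x s le_rfl))
    ((Complex.continuous_ofReal.comp
      ((((continuous_hermiteDeriv n).comp (continuous_plus x)).mul
          ((continuous_hermiteFun n).comp (continuous_minus x))).add
        (((continuous_hermiteFun n).comp (continuous_plus x)).mul
          ((continuous_hermiteDeriv n).comp (continuous_minus x))))).mul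
      (continuous_eker k) |>.aestronglyMeasurable)
    (Filter.Eventually.of_forall fun s x' hx' => by
      rw [norm_mul, Complex.norm_real, Real.norm_eq_abs, norm_eker, mul_one]
      have hx'le : |x'| ≤ |x|+1 := by
        have := mem_ball_iff_norm.mp hx'
        rw [Real.norm_eq_abs] at this
        have h := abs_add_le (x' - x) x
        simp only [sub_add_cancel] at h
        linarith
      obtain ⟨b1, b2⟩ := hC x' s hx'le
      calc |hermiteDeriv n (x' + s / 2) * hermiteFun n (x' - s / 2)
            + hermiteFun n (x' + s / 2) * hermiteDeriv n (x' - s / 2)|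
          ≤ |hermiteDeriv n (x' + s / 2) * hermiteFun n (x' - s / 2)|
            + |hermiteFun n (x' + s / 2) * hermiteDeriv n (x' - s / 2)| := abs_add_le _ _
        _ ≤ C * wB (n+n+1) s + C * wB (n+n+1) s := by
            rw [abs_mul, abs_mul]
            exact add_le_add b1 b2
        _ = (C + C) * wB (n+n+1) s := by ring)
    ((integrable_wB (n+n+1)).const_mul (C + C))
    (Filter.Eventually.of_forall fun s x' _ => by
      have hp : HasDerivAt (fun u : ℝ => hermiteFun n (u + s/2))
          (hermiteDeriv n (x' + s/2)) x' := by
        have := (hasDerivAt_hermiteFun hn (x' + s/2)).comp x'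
          ((hasDerivAt_id x').add_const (s/2))
        exact this.congr_deriv (mul_one _)
      have hm : HasDerivAt (fun u : ℝ => hermiteFun n (u - s/2))
          (hermiteDeriv n (x' - s/2)) x' := by
        have := (hasDerivAt_hermiteFun hn (x' - s/2)).comp x'
          ((hasDerivAt_id x').sub_const (s/2))
        exact this.congr_deriv (mul_one _)
      exact ((hp.mul hm).ofReal_comp).mul_const _)
  have hfinal := key.2.const_mul (((2 * Real.pi)⁻¹ : ℝ) : ℂ)
  unfold wignerDiag
  exact hfinal

end Helpers

/-- The cross-Wigner function of consecutive Hermite functions is expressed through the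
diagonal Wigner function: `h_n = (2n)^{-1/2}·((x + ½∂ₓ) − i(k + ½∂_k)) g_n`. -/
theorem wignerCross_eq_of_wignerDiag (n : ℕ) (hn : 1 ≤ n) :
    (∀ x k : ℝ,
      DifferentiableAt ℝ (fun x' => wignerDiag n x' k) x ∧
      DifferentiableAt ℝ (fun k' => wignerDiag n x k') k) ∧
    (∀ x k : ℝ,
      wignerCross n x k =
        (((Real.sqrt (2 * n))⁻¹ : ℝ) : ℂ) *
          (((x : ℂ) - Complex.I * (k : ℂ)) * wignerDiag n x k +
            (1 / 2 : ℂ) * deriv (fun x' => wignerDiag n x' k) x -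
            (Complex.I / 2) * deriv (fun k' => wignerDiag n x k') k)) := by
  refine ⟨fun x k => ⟨(wignerDiag_hasDerivAt_x n hn x k).differentiableAt,
    (wignerDiag_hasDerivAt_k n x k).differentiableAt⟩, fun x k => ?_⟩
  rw [(wignerDiag_hasDerivAt_x n hn x k).deriv, (wignerDiag_hasDerivAt_k n x k).deriv]
  -- Integrability of the various integrands
  obtain ⟨C2, hC20, hC2⟩ := prod_bound n n |x| (abs_nonneg x)
  obtain ⟨C, hC0, hC⟩ := hermiteDeriv_prod_bound n |x| (abs_nonneg x)
  have hphi : ∀ s : ℝ, |hermiteFun n (x+s/2) * hermiteFun n (x-s/2)| ≤ C2 * wB (n+n) s :=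
    fun s => by rw [abs_mul]; exact hC2 x s le_rfl
  have hA : Integrable (fun s : ℝ =>
      ((hermiteFun n (x + s / 2) * hermiteFun n (x - s / 2) : ℝ) : ℂ) *
        Complex.exp (-Complex.I * k * s)) :=
    integrable_of_bound (N := n+n)
      (((continuous_phi n n x).mul (continuous_eker k)).aestronglyMeasurable)
      (fun s => by
        rw [norm_mul, Complex.norm_real, Real.norm_eq_abs, norm_eker, mul_one]
        exact hphi s)
  have contDXr : Continuous (fun s : ℝ => hermiteDeriv n (x + s / 2) * hermiteFun n (x - s / 2)
      + hermiteFun n (x + s / 2) * hermiteDeriv n (x - s / 2)) :=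
    (((continuous_hermiteDeriv n).comp (continuous_plus x)).mul
        ((continuous_hermiteFun n).comp (continuous_minus x))).add
      (((continuous_hermiteFun n).comp (continuous_plus x)).mul
        ((continuous_hermiteDeriv n).comp (continuous_minus x)))
  have hDXbound : ∀ s : ℝ, |hermiteDeriv n (x + s / 2) * hermiteFun n (x - s / 2)
      + hermiteFun n (x + s / 2) * hermiteDeriv n (x - s / 2)| ≤ (C+C) * wB (n+n+1) s := by
    intro s
    obtain ⟨b1, b2⟩ := hC x s le_rfl
    calc |hermiteDeriv n (x + s / 2) * hermiteFun n (x - s / 2)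
        + hermiteFun n (x + s / 2) * hermiteDeriv n (x - s / 2)|
        ≤ |hermiteDeriv n (x + s / 2) * hermiteFun n (x - s / 2)|
          + |hermiteFun n (x + s / 2) * hermiteDeriv n (x - s / 2)| := abs_add_le _ _
      _ ≤ C * wB (n+n+1) s + C * wB (n+n+1) s := by
          rw [abs_mul, abs_mul]
          exact add_le_add b1 b2
      _ = (C+C) * wB (n+n+1) s := by ring
  have hDX : Integrable (fun s : ℝ =>
      ((hermiteDeriv n (x + s / 2) * hermiteFun n (x - s / 2)
          + hermiteFun n (x + s / 2) * hermiteDeriv n (x - s / 2) : ℝ) : ℂ) *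
        Complex.exp (-Complex.I * k * s)) :=
    integrable_of_bound (N := n+n+1)
      (((Complex.continuous_ofReal.comp contDXr).mul (continuous_eker k)).aestronglyMeasurable)
      (fun s => by
        rw [norm_mul, Complex.norm_real, Real.norm_eq_abs, norm_eker, mul_one]
        exact hDXbound s)
  have hnormIs : ∀ s : ℝ, ‖-Complex.I * (s:ℂ)‖ = |s| := fun s => by
    rw [norm_mul, norm_neg, Complex.norm_I, one_mul, Complex.norm_real, Real.norm_eq_abs]
  have hDK : Integrable (fun s : ℝ =>
      ((hermiteFun n (x + s / 2) * hermiteFun n (x - s / 2) : ℝ) : ℂ) *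
        ((-Complex.I * s) * Complex.exp (-Complex.I * k * s))) :=
    integrable_of_bound (N := n+n+1)
      (((continuous_phi n n x).mul
        ((continuous_const.mul Complex.continuous_ofReal).mul
          (continuous_eker k))).aestronglyMeasurable)
      (fun s => by
        rw [norm_mul, Complex.norm_real, Real.norm_eq_abs, norm_mul, norm_eker, mul_one,
          hnormIs s]
        calc |hermiteFun n (x+s/2) * hermiteFun n (x-s/2)| * |s|
            ≤ (C2 * wB (n+n) s) * (1+|s|) :=
              mul_le_mul (hphi s) (by linarith [abs_nonneg s]) (abs_nonneg s)
                (mul_nonneg hC20 (wB_nonneg _ _))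
          _ = C2 * wB (n+n+1) s := by rw [← wB_succ]; ring)
  -- The total-derivative term
  have hGderiv : ∀ s : ℝ, HasDerivAt
      (fun s' : ℝ => ((hermiteFun n (x + s' / 2) * hermiteFun n (x - s' / 2) : ℝ) : ℂ) *
        Complex.exp (-Complex.I * k * s'))
      (((hermiteDeriv n (x + s / 2) * (1/2) * hermiteFun n (x - s / 2)
          + hermiteFun n (x + s / 2) * (hermiteDeriv n (x - s / 2) * -(1/2)) : ℝ) : ℂ) *
          Complex.exp (-Complex.I * k * s)
        + ((hermiteFun n (x + s / 2) * hermiteFun n (x - s / 2) : ℝ) : ℂ) *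
          ((-Complex.I * k) * Complex.exp (-Complex.I * k * s))) s := by
    intro s
    have hp : HasDerivAt (fun s' : ℝ => hermiteFun n (x + s' / 2))
        (hermiteDeriv n (x + s / 2) * (1/2)) s := by
      have := (hasDerivAt_hermiteFun hn (x + s / 2)).comp s
        (((hasDerivAt_id s).div_const 2).const_add x)
      exact this
    have hm : HasDerivAt (fun s' : ℝ => hermiteFun n (x - s' / 2))
        (hermiteDeriv n (x - s / 2) * -(1/2)) s := by
      have := (hasDerivAt_hermiteFun hn (x - s / 2)).comp s
        (((hasDerivAt_id s).div_const 2).const_sub x)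
      exact this
    exact ((hp.mul hm).ofReal_comp).mul (hasDerivAt_eker_s k s)
  have hG'int : Integrable (fun s : ℝ =>
      ((hermiteDeriv n (x + s / 2) * (1/2) * hermiteFun n (x - s / 2)
          + hermiteFun n (x + s / 2) * (hermiteDeriv n (x - s / 2) * -(1/2)) : ℝ) : ℂ) *
          Complex.exp (-Complex.I * k * s)
        + ((hermiteFun n (x + s / 2) * hermiteFun n (x - s / 2) : ℝ) : ℂ) *
          ((-Complex.I * k) * Complex.exp (-Complex.I * k * s))) := by
    apply Integrable.add
    · apply integrable_of_bound (N := n+n+1) (C := C)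
      · refine (Complex.continuous_ofReal.comp ?_).mul (continuous_eker k)
          |>.aestronglyMeasurable
        exact ((((continuous_hermiteDeriv n).comp (continuous_plus x)).mul
            continuous_const).mul ((continuous_hermiteFun n).comp (continuous_minus x))).add
          (((continuous_hermiteFun n).comp (continuous_plus x)).mul
            (((continuous_hermiteDeriv n).comp (continuous_minus x)).mul continuous_const))
      · intro s
        rw [norm_mul, Complex.norm_real, Real.norm_eq_abs, norm_eker, mul_one]
        obtain ⟨b1, b2⟩ := hC x s le_rfl
        have e1 : |hermiteDeriv n (x + s / 2) * (1/2) * hermiteFun n (x - s / 2)|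
            = 1/2 * (|hermiteDeriv n (x + s / 2)| * |hermiteFun n (x - s / 2)|) := by
          rw [abs_mul, abs_mul, show |(1/2:ℝ)| = 1/2 from by norm_num]
          ring
        have e2 : |hermiteFun n (x + s / 2) * (hermiteDeriv n (x - s / 2) * -(1/2))|
            = 1/2 * (|hermiteFun n (x + s / 2)| * |hermiteDeriv n (x - s / 2)|) := by
          rw [abs_mul, abs_mul, show |(-(1/2):ℝ)| = 1/2 from by norm_num]
          ring
        have h := abs_add_le (hermiteDeriv n (x + s / 2) * (1/2) * hermiteFun n (x - s / 2))
          (hermiteFun n (x + s / 2) * (hermiteDeriv n (x - s / 2) * -(1/2)))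
        rw [e1, e2] at h
        linarith
    · apply integrable_of_bound (N := n+n+1) (C := |k| * C2)
      · exact ((continuous_phi n n x).mul
          ((continuous_const.mul (continuous_eker k)))).aestronglyMeasurable
      · intro s
        rw [norm_mul, Complex.norm_real, Real.norm_eq_abs, norm_mul, norm_eker, mul_one]
        have hIk : ‖-Complex.I * (k:ℂ)‖ = |k| := by
          rw [norm_mul, norm_neg, Complex.norm_I, one_mul, Complex.norm_real, Real.norm_eq_abs]
        rw [hIk]
        calc |hermiteFun n (x+s/2) * hermiteFun n (x-s/2)| * |k|
            ≤ (C2 * wB (n+n) s) * |k| :=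
              mul_le_mul_of_nonneg_right (hphi s) (abs_nonneg k)
          _ ≤ (C2 * wB (n+n+1) s) * |k| :=
              mul_le_mul_of_nonneg_right
                (mul_le_mul_of_nonneg_left (wB_mono (by omega) s) hC20) (abs_nonneg k)
          _ = |k| * C2 * wB (n+n+1) s := by ring
  have hGnorm : ∀ s : ℝ, ‖((hermiteFun n (x + s / 2) * hermiteFun n (x - s / 2) : ℝ) : ℂ) *
      Complex.exp (-Complex.I * k * s)‖ ≤ C2 * wB (n+n) s := fun s => by
    rw [norm_mul, Complex.norm_real, Real.norm_eq_abs, norm_eker, mul_one]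
    exact hphi s
  have htop := squeeze_zero_norm hGnorm
    (by simpa using (tendsto_wB_atTop (n+n)).const_mul C2)
  have hbot := squeeze_zero_norm hGnorm
    (by simpa using (tendsto_wB_atBot (n+n)).const_mul C2)
  have hzero := integral_deriv_zero _ _ hGderiv hG'int htop hbot
  -- Pointwise algebraic identity
  have key : ∀ s : ℝ,
      ((Real.sqrt (2*(n:ℝ)) : ℝ) : ℂ) *
        (((hermiteFun n (x + s / 2) * hermiteFun (n - 1) (x - s / 2) : ℝ) : ℂ) *
          Complex.exp (-Complex.I * k * s))
      = ((x : ℂ) - Complex.I * k) *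
          (((hermiteFun n (x + s / 2) * hermiteFun n (x - s / 2) : ℝ) : ℂ) *
            Complex.exp (-Complex.I * k * s))
        + (1/2 : ℂ) *
          (((hermiteDeriv n (x + s / 2) * hermiteFun n (x - s / 2)
              + hermiteFun n (x + s / 2) * hermiteDeriv n (x - s / 2) : ℝ) : ℂ) *
            Complex.exp (-Complex.I * k * s))
        - (Complex.I/2) *
          (((hermiteFun n (x + s / 2) * hermiteFun n (x - s / 2) : ℝ) : ℂ) *
            ((-Complex.I * s) * Complex.exp (-Complex.I * k * s)))
        - (((hermiteDeriv n (x + s / 2) * (1/2) * hermiteFun n (x - s / 2)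
              + hermiteFun n (x + s / 2) * (hermiteDeriv n (x - s / 2) * -(1/2)) : ℝ) : ℂ) *
              Complex.exp (-Complex.I * k * s)
            + ((hermiteFun n (x + s / 2) * hermiteFun n (x - s / 2) : ℝ) : ℂ) *
              ((-Complex.I * k) * Complex.exp (-Complex.I * k * s))) := by
    intro s
    have hsub : Real.sqrt (2*(n:ℝ)) * hermiteFun (n-1) (x - s / 2)
        = hermiteDeriv n (x - s / 2) + (x - s / 2) * hermiteFun n (x - s / 2) := by
      unfold hermiteDeriv
      ring
    have hsubC := congrArg (fun r : ℝ => (r : ℂ)) hsub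
    push_cast at hsubC
    push_cast
    linear_combination (((hermiteFun n (x + s / 2) : ℝ) : ℂ) *
        Complex.exp (-Complex.I * k * s)) * hsubC
      - ((s:ℂ)/2 * ((hermiteFun n (x + s / 2) : ℝ) : ℂ) *
        ((hermiteFun n (x - s / 2) : ℝ) : ℂ) *
        Complex.exp (-Complex.I * k * s)) * Complex.I_sq
  -- Integrate the identity
  have hstep : ((Real.sqrt (2*(n:ℝ)) : ℝ) : ℂ) *
      (∫ s : ℝ, ((hermiteFun n (x + s / 2) * hermiteFun (n - 1) (x - s / 2) : ℝ) : ℂ) *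
        Complex.exp (-Complex.I * k * s))
      = ((x : ℂ) - Complex.I * k) *
          (∫ s : ℝ, ((hermiteFun n (x + s / 2) * hermiteFun n (x - s / 2) : ℝ) : ℂ) *
            Complex.exp (-Complex.I * k * s))
        + (1/2 : ℂ) *
          (∫ s : ℝ, ((hermiteDeriv n (x + s / 2) * hermiteFun n (x - s / 2)
              + hermiteFun n (x + s / 2) * hermiteDeriv n (x - s / 2) : ℝ) : ℂ) *
            Complex.exp (-Complex.I * k * s))
        - (Complex.I/2) *
          (∫ s : ℝ, ((hermiteFun n (x + s / 2) * hermiteFun n (x - s / 2) : ℝ) : ℂ) *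
            ((-Complex.I * s) * Complex.exp (-Complex.I * k * s))) := by
    rw [← integral_const_mul]
    rw [show (fun s : ℝ => ((Real.sqrt (2*(n:ℝ)) : ℝ) : ℂ) *
        (((hermiteFun n (x + s / 2) * hermiteFun (n - 1) (x - s / 2) : ℝ) : ℂ) *
          Complex.exp (-Complex.I * k * s)))
      = fun s : ℝ =>
        (((x : ℂ) - Complex.I * k) *
          (((hermiteFun n (x + s / 2) * hermiteFun n (x - s / 2) : ℝ) : ℂ) *
            Complex.exp (-Complex.I * k * s))
        + (1/2 : ℂ) *
          (((hermiteDeriv n (x + s / 2) * hermiteFun n (x - s / 2)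
              + hermiteFun n (x + s / 2) * hermiteDeriv n (x - s / 2) : ℝ) : ℂ) *
            Complex.exp (-Complex.I * k * s))
        - (Complex.I/2) *
          (((hermiteFun n (x + s / 2) * hermiteFun n (x - s / 2) : ℝ) : ℂ) *
            ((-Complex.I * s) * Complex.exp (-Complex.I * k * s))))
        - (((hermiteDeriv n (x + s / 2) * (1/2) * hermiteFun n (x - s / 2)
              + hermiteFun n (x + s / 2) * (hermiteDeriv n (x - s / 2) * -(1/2)) : ℝ) : ℂ) *
              Complex.exp (-Complex.I * k * s)
            + ((hermiteFun n (x + s / 2) * hermiteFun n (x - s / 2) : ℝ) : ℂ) *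
              ((-Complex.I * k) * Complex.exp (-Complex.I * k * s)))
      from funext key]
    have hPA : Integrable (fun s : ℝ => ((x : ℂ) - Complex.I * k) *
        (((hermiteFun n (x + s / 2) * hermiteFun n (x - s / 2) : ℝ) : ℂ) *
          Complex.exp (-Complex.I * k * s))) := hA.const_mul _
    have hPX : Integrable (fun s : ℝ => (1/2 : ℂ) *
        (((hermiteDeriv n (x + s / 2) * hermiteFun n (x - s / 2)
            + hermiteFun n (x + s / 2) * hermiteDeriv n (x - s / 2) : ℝ) : ℂ) *
          Complex.exp (-Complex.I * k * s))) := hDX.const_mul _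
    have hPK : Integrable (fun s : ℝ => (Complex.I/2) *
        (((hermiteFun n (x + s / 2) * hermiteFun n (x - s / 2) : ℝ) : ℂ) *
          ((-Complex.I * s) * Complex.exp (-Complex.I * k * s)))) := hDK.const_mul _
    have hPAX : Integrable (fun s : ℝ => ((x : ℂ) - Complex.I * k) *
        (((hermiteFun n (x + s / 2) * hermiteFun n (x - s / 2) : ℝ) : ℂ) *
          Complex.exp (-Complex.I * k * s)) + (1/2 : ℂ) *
        (((hermiteDeriv n (x + s / 2) * hermiteFun n (x - s / 2)
            + hermiteFun n (x + s / 2) * hermiteDeriv n (x - s / 2) : ℝ) : ℂ) *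
          Complex.exp (-Complex.I * k * s))) := hPA.add hPX
    have hPAXK : Integrable (fun s : ℝ => (((x : ℂ) - Complex.I * k) *
        (((hermiteFun n (x + s / 2) * hermiteFun n (x - s / 2) : ℝ) : ℂ) *
          Complex.exp (-Complex.I * k * s)) + (1/2 : ℂ) *
        (((hermiteDeriv n (x + s / 2) * hermiteFun n (x - s / 2)
            + hermiteFun n (x + s / 2) * hermiteDeriv n (x - s / 2) : ℝ) : ℂ) *
          Complex.exp (-Complex.I * k * s))) - (Complex.I/2) *
        (((hermiteFun n (x + s / 2) * hermiteFun n (x - s / 2) : ℝ) : ℂ) *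
          ((-Complex.I * s) * Complex.exp (-Complex.I * k * s)))) := hPAX.sub hPK
    rw [integral_sub hPAXK hG'int, hzero, sub_zero, integral_sub hPAX hPK,
      integral_add hPA hPX, integral_const_mul, integral_const_mul, integral_const_mul]
  -- Conclude
  unfold wignerCross wignerDiag
  have hsqrt_pos : (0:ℝ) < Real.sqrt (2*(n:ℝ)) := by
    apply Real.sqrt_pos.mpr
    have h : (0:ℝ) < (n:ℝ) := by exact_mod_cast hn
    linarith
  have hsq : ((Real.sqrt (2*(n:ℝ)) : ℝ) : ℂ) ≠ 0 := by
    simp only [ne_eq, Complex.ofReal_eq_zero]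
    exact hsqrt_pos.ne'
  rw [Complex.ofReal_inv, Complex.ofReal_inv]
  apply Eq.symm
  rw [inv_mul_eq_iff_eq_mul₀ hsq]
  linear_combination (-((((2 * Real.pi) : ℝ) : ℂ))⁻¹) * hstep
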